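/- Let α,β be k-algebra automorphisms of A and ⟪-,-⟫ a double bracket on A associated with the (α,β)-twisted inner bimodule structure (a·d·b = d'β(b)⊗α(a)d''). Then ⟪-,-⟫ is a double Poisson bracket if and only if the double bracket ⟪-,-⟫° := ° ∘ ⟪-,-⟫, which is a double bracket associated with the (α,β)-twisted outer bimodule structure (a·d·b = α(a)d'⊗d''β(b)), is a double Poisson bracket. -/

import Mathlib

open scoped TensorProduct

noncomputable section

/-- A (`k`-linear) `A`-bimodule-type structure on a `k`-module `M`,
given by a three-slot action `a · d · b`. -/
structure BimodOn (k A M : Type*) [CommSemiring k] [Ring A] [Algebra k A]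
    [AddCommMonoid M] [Module k M] where
  act : A → M → A → M
  add_left : ∀ (a a' : A) (d : M) (b : A), act (a + a') d b = act a d b + act a' d b
  add_mid : ∀ (a : A) (d d' : M) (b : A), act a (d + d') b = act a d b + act a d' b
  add_right : ∀ (a : A) (d : M) (b b' : A), act a d (b + b') = act a d b + act a d b'
  smul_left : ∀ (c : k) (a : A) (d : M) (b : A), act (c • a) d b = c • act a d b
  smul_mid : ∀ (c : k) (a : A) (d : M) (b : A), act a (c • d) b = c • act a d b
  smul_right : ∀ (c : k) (a : A) (d : M) (b : A), act a d (c • b) = c • act a d b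
  act_one_one : ∀ d : M, act 1 d 1 = d
  act_mul : ∀ (a a' : A) (d : M) (b b' : A), act a (act a' d b') b = act (a * a') d (b' * b)

/-- An `A`-bimodule structure on `A ⊗[k] A`. -/
abbrev BimodStr (k A : Type*) [CommSemiring k] [Ring A] [Algebra k A] :=
  BimodOn k A (A ⊗[k] A)

section Defs

variable (k A : Type*) [CommSemiring k] [Ring A] [Algebra k A]

/-- The swap automorphism `°` of `A ⊗[k] A`, `a ⊗ b ↦ b ⊗ a`. -/
def swapT : A ⊗[k] A →ₗ[k] A ⊗[k] A := (TensorProduct.comm k A A).toLinearMap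

variable {k A}

namespace BimodOn

/-- The swap bimodule structure `a * d * b = (a · d° · b)°` associated with a
bimodule structure on `A ⊗[k] A`. -/
def star (S : BimodStr k A) (a : A) (d : A ⊗[k] A) (b : A) : A ⊗[k] A :=
  swapT k A (S.act a (swapT k A d) b)

/-- A bimodule structure on `A ⊗[k] A` is swap-commuting if it commutes with its
swap bimodule structure. -/
def SwapCommuting (S : BimodStr k A) : Prop :=
  ∀ (a₁ a₂ b₁ b₂ : A) (d : A ⊗[k] A),
    S.act a₁ (S.star a₂ d b₂) b₁ = S.star a₂ (S.act a₁ d b₁) b₂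

end BimodOn

end Defs

/-- A double bracket on `A` associated with a bimodule structure `S` on `A ⊗[k] A`
(with swap bimodule structure `S.star`). -/
structure DoubleBracket {k A : Type*} [CommSemiring k] [Ring A] [Algebra k A]
    (S : BimodStr k A) where
  br : A →ₗ[k] A →ₗ[k] A ⊗[k] A
  antisymm : ∀ a b : A, br a b = - swapT k A (br b a)
  leibniz_right : ∀ a b c : A, br a (b * c) = S.act b (br a c) 1 + S.act 1 (br a b) c
  leibniz_left : ∀ a b c : A, br (b * c) a = S.star b (br c a) 1 + S.star 1 (br b a) c

section Taus

variable (k A : Type*) [CommSemiring k] [Ring A] [Algebra k A]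

/-- `τ_{(123)}` on `A^{⊗3}`: `a ⊗ b ⊗ c ↦ c ⊗ a ⊗ b`. -/
def tau123 : (A ⊗[k] A) ⊗[k] A →ₗ[k] (A ⊗[k] A) ⊗[k] A :=
  ((TensorProduct.comm k (A ⊗[k] A) A).trans (TensorProduct.assoc k A A A).symm).toLinearMap

/-- `τ_{(132)}` on `A^{⊗3}`: `a ⊗ b ⊗ c ↦ b ⊗ c ⊗ a`. -/
def tau132 : (A ⊗[k] A) ⊗[k] A →ₗ[k] (A ⊗[k] A) ⊗[k] A :=
  ((TensorProduct.assoc k A A A).trans (TensorProduct.comm k A (A ⊗[k] A))).toLinearMap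

/-- `τ_{(12)}` on `A^{⊗3}`: `a ⊗ b ⊗ c ↦ b ⊗ a ⊗ c`. -/
def tau12 : (A ⊗[k] A) ⊗[k] A →ₗ[k] (A ⊗[k] A) ⊗[k] A :=
  (TensorProduct.congr (TensorProduct.comm k A A) (LinearEquiv.refl k A)).toLinearMap

variable {k A}

/-- `⟪a, -⟫_L : A ⊗ A → A ⊗ A ⊗ A`, `b₁ ⊗ b₂ ↦ ⟪a, b₁⟫ ⊗ b₂`. -/
def trL (br : A →ₗ[k] A →ₗ[k] A ⊗[k] A) (a : A) :
    A ⊗[k] A →ₗ[k] (A ⊗[k] A) ⊗[k] A :=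
  TensorProduct.map (br a) LinearMap.id

/-- The double Jacobiator of a bilinear operation `A × A → A ⊗ A`:
`⟪a,b,c⟫ = ⟪a,⟪b,c⟫⟫_L + τ_{(123)} ⟪b,⟪c,a⟫⟫_L + τ_{(132)} ⟪c,⟪a,b⟫⟫_L`. -/
def jac (br : A →ₗ[k] A →ₗ[k] A ⊗[k] A) (a b c : A) : (A ⊗[k] A) ⊗[k] A :=
  trL br a (br b c) + tau123 k A (trL br b (br c a)) + tau132 k A (trL br c (br a b))

end Taus

end

/-! Up to sign and the factor swap `τ_{(12)}`, the Jacobiator of `° ∘ ⟪-,-⟫` at `(a, b, c)` is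
the Jacobiator of `⟪-,-⟫` at `(a, c, b)`: by antisymmetry,
`(° ∘ ⟪-,-⟫)(x, y) = -⟪y, x⟫`, and `τ_{(12)}` conjugates `τ_{(123)}` into `τ_{(132)}`.
Since `τ_{(12)}` is bijective, one Jacobiator vanishes identically iff the other does. -/

section SwapJacobiator

variable {k A : Type*} [CommSemiring k] [Ring A] [Algebra k A]

@[simp]
lemma swapT_swapT (d : A ⊗[k] A) : swapT k A (swapT k A d) = d :=
  TensorProduct.comm_comm k A A d

lemma tau12_injective : Function.Injective (tau12 k A) :=
  (TensorProduct.congr (TensorProduct.comm k A A) (LinearEquiv.refl k A)).injective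

lemma tau123_tau12 (t : (A ⊗[k] A) ⊗[k] A) :
    tau123 k A (tau12 k A t) = tau12 k A (tau132 k A t) :=
  LinearMap.congr_fun (f := tau123 k A ∘ₗ tau12 k A) (g := tau12 k A ∘ₗ tau132 k A)
    (TensorProduct.ext_threefold fun _ _ _ => rfl) t

lemma tau132_tau12 (t : (A ⊗[k] A) ⊗[k] A) :
    tau132 k A (tau12 k A t) = tau12 k A (tau123 k A t) :=
  LinearMap.congr_fun (f := tau132 k A ∘ₗ tau12 k A) (g := tau12 k A ∘ₗ tau123 k A)
    (TensorProduct.ext_threefold fun _ _ _ => rfl) t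

variable {br₁ br₂ : A →ₗ[k] A →ₗ[k] A ⊗[k] A}

lemma trL_eq_tau12_comp_trL (hbr : ∀ a b : A, br₂ a b = swapT k A (br₁ a b)) (a : A) :
    trL br₂ a = tau12 k A ∘ₗ trL br₁ a :=
  TensorProduct.ext' fun x y => by simp [trL, hbr, tau12, swapT]

lemma jac_eq_neg_tau12_jac (hanti : ∀ a b : A, br₁ a b = - swapT k A (br₁ b a))
    (hbr : ∀ a b : A, br₂ a b = swapT k A (br₁ a b)) (a b c : A) :
    jac br₂ a b c = - tau12 k A (jac br₁ a c b) := by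
  have hflip : ∀ x y : A, br₂ x y = - br₁ y x := fun x y => by
    rw [hbr, hanti x y, map_neg, swapT_swapT]
  simp only [jac, hflip b c, hflip c a, hflip a b, trL_eq_tau12_comp_trL hbr,
    LinearMap.comp_apply, map_neg, tau123_tau12, tau132_tau12, map_add]
  abel

end SwapJacobiator

theorem twisted_inner_poisson_iff_twisted_outer_poisson_general
    {k A : Type*} [Field k] [Ring A] [Algebra k A]
    (Sin : BimodStr k A)
    (Sout : BimodStr k A)
    (D₁ : DoubleBracket Sin) (D₂ : DoubleBracket Sout)
    (hbr : ∀ a b : A, D₂.br a b = swapT k A (D₁.br a b)) :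
    (∀ a b c : A, jac D₁.br a b c = 0) ↔ (∀ a b c : A, jac D₂.br a b c = 0) := by
  have key := jac_eq_neg_tau12_jac D₁.antisymm hbr
  refine ⟨fun h a b c => by rw [key, h, map_zero, neg_zero], fun h a b c => ?_⟩
  apply tau12_injective (k := k) (A := A)
  rw [map_zero, ← neg_eq_zero, ← key, h]

/-- Theorem `Poi-OutIn`: a double bracket associated with the
`(α,β)`-twisted inner bimodule structure `a · d · b = d'β(b) ⊗ α(a)d''` is Poisson iff the
swap-equivalent double bracket `° ∘ ⟪-,-⟫` associated with the `(α,β)`-twisted outer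
bimodule structure `a · d · b = α(a)d' ⊗ d''β(b)` is Poisson. -/
theorem twisted_inner_poisson_iff_twisted_outer_poisson
    {k A : Type*} [Field k] [CharZero k] [Ring A] [Algebra k A]
    (α β : A ≃ₐ[k] A)
    (Sin : BimodStr k A)
    (hin : ∀ (a b : A) (d : A ⊗[k] A),
      Sin.act a d b = ((1 : A) ⊗ₜ[k] (α a)) * d * ((β b) ⊗ₜ[k] (1 : A)))
    (Sout : BimodStr k A)
    (hout : ∀ (a b : A) (d : A ⊗[k] A),
      Sout.act a d b = ((α a) ⊗ₜ[k] (1 : A)) * d * ((1 : A) ⊗ₜ[k] (β b)))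
    (D₁ : DoubleBracket Sin) (D₂ : DoubleBracket Sout)
    (hbr : ∀ a b : A, D₂.br a b = swapT k A (D₁.br a b)) :
    (∀ a b c : A, jac D₁.br a b c = 0) ↔ (∀ a b c : A, jac D₂.br a b c = 0) :=
  twisted_inner_poisson_iff_twisted_outer_poisson_general Sin Sout D₁ D₂ hbr
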